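/- The set E := ⋃_{x ∈ (−1,1)} Δ((x+1)/2, (1−x)/2) × Δ((1−x)/2, (1+x)/2) ⊂ ℂ² is convex, where Δ(c,r) is the open disc of center c ∈ ℝ and radius r. -/
import Mathlib


open Set Metric

/-- The union of products of discs. -/
def Eset : Set (ℂ × ℂ) :=
  ⋃ x ∈ Set.Ioo (-1:ℝ) 1,
    (ball (((x + 1) / 2 : ℝ) : ℂ) ((1 - x) / 2)) ×ˢ
      (ball (((1 - x) / 2 : ℝ) : ℂ) ((1 + x) / 2))

lemma ball_combo {z₁ z₂ c₁ c₂ : ℂ} {r₁ r₂ t s : ℝ} (ht : 0 ≤ t) (hs : 0 ≤ s)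
    (hts : t + s = 1) (h₁ : z₁ ∈ ball c₁ r₁) (h₂ : z₂ ∈ ball c₂ r₂) :
    t • z₁ + s • z₂ ∈ ball (t • c₁ + s • c₂) (t * r₁ + s * r₂) := by
  simp only [mem_ball] at *
  have key : dist (t • z₁ + s • z₂) (t • c₁ + s • c₂)
      ≤ t * dist z₁ c₁ + s * dist z₂ c₂ := by
    calc dist (t • z₁ + s • z₂) (t • c₁ + s • c₂)
        ≤ dist (t • z₁) (t • c₁) + dist (s • z₂) (s • c₂) := dist_add_add_le _ _ _ _
      _ = t * dist z₁ c₁ + s * dist z₂ c₂ := by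
          rw [dist_smul₀, dist_smul₀, Real.norm_of_nonneg ht, Real.norm_of_nonneg hs]
  rcases ht.eq_or_lt with h | h
  · have hs1 : s = 1 := by linarith
    subst hs1
    rw [← h]
    simpa using h₂
  · have h1 : t * dist z₁ c₁ < t * r₁ := by exact mul_lt_mul_of_pos_left h₁ h
    have h2 : s * dist z₂ c₂ ≤ s * r₂ := mul_le_mul_of_nonneg_left h₂.le hs
    linarith

theorem stmt_16 : Convex ℝ Eset := by
  intro p hp q hq t s ht hs hts
  simp only [Eset, mem_iUnion, mem_prod, exists_prop] at hp hq ⊢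
  obtain ⟨x, hx, hp1, hp2⟩ := hp
  obtain ⟨y, hy, hq1, hq2⟩ := hq
  have htsC : (t : ℂ) + s = 1 := by exact_mod_cast hts
  refine ⟨t * x + s * y, convex_Ioo (-1 : ℝ) 1 hx hy ht hs hts, ?_, ?_⟩
  · have := ball_combo ht hs hts hp1 hq1
    have hc : ((((t * x + s * y) + 1) / 2 : ℝ) : ℂ)
        = t • (((x + 1) / 2 : ℝ) : ℂ) + s • (((y + 1) / 2 : ℝ) : ℂ) := by
      simp only [Complex.real_smul]
      push_cast
      linear_combination (-1/2 : ℂ) * htsC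
    have hr : (1 - (t * x + s * y)) / 2 = t * ((1 - x) / 2) + s * ((1 - y) / 2) := by
      linear_combination (-1/2 : ℝ) * hts
    rw [hc, hr]
    simpa using this
  · have := ball_combo ht hs hts hp2 hq2
    have hc : (((1 - (t * x + s * y)) / 2 : ℝ) : ℂ)
        = t • (((1 - x) / 2 : ℝ) : ℂ) + s • (((1 - y) / 2 : ℝ) : ℂ) := by
      simp only [Complex.real_smul]
      push_cast
      linear_combination (-1/2 : ℂ) * htsC
    have hr : (1 + (t * x + s * y)) / 2 = t * ((1 + x) / 2) + s * ((1 + y) / 2) := by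
      linear_combination (-1/2 : ℝ) * hts
    rw [hc, hr]
    simpa using this
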